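/- Assume the coordinate quasi-Codazzi setup on U with vanishing relative torsions: T⁺(X,Y) = 0 and T⁻(X,Y) = 0 for all smooth vector fields X, Y. Let ρ be a weak contrast function on U compatible with the structure, i.e. for all x ∈ U and v, w, u ∈ ℝⁿ: h x v w = −ρ[v|w](x) and C(v,w,u)(x) = ρ[vw|u](x) − ρ[u|vw](x), where v, w, u are regarded as constant vector fields. Then for all x ∈ U and v, w, u ∈ ℝⁿ: p x ((∇⁺_v(Φ⁺w))(x)) (Φ⁻ x u) = −(1/2) · ρ[vw|u](x), and p x (Φ⁺ x u) ((∇⁻_v(Φ⁻w))(x)) = −(1/2) · ρ[u|vw](x). (Paper's Corollary 3.28.) -/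

import Mathlib

/-! At a point `x`, write `Γ⁺(v,w,u) = p(∇⁺_v(Φ⁺w), Φ⁻u)` and `Γ⁻(v,w,u) = p(Φ⁺u, ∇⁻_v(Φ⁻w))`
for constant fields. Differentiating `h = -ρ[·|·]` along `v`, with the duality of `A⁺` and `A⁻`,
gives `2(Γ⁺(v,w,u) + Γ⁻(v,u,w)) = -(ρ[vw|u] + ρ[w|vu])`, while the compatibility with `C` gives
`-2(Γ⁺ - Γ⁻)(v,w,u) = ρ[vw|u] - ρ[u|vw]`. Eliminating `Γ⁻`, the form `Γ⁺ + ρ[··|·]/2` is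
antisymmetric in its last two arguments; it is symmetric in its first two because `T⁺` vanishes
on constant fields and `D³ρ` is symmetric. Such a form vanishes, which is the first identity; the
second then follows from the compatibility with `C`. -/

noncomputable section

open Set

/-- ℝⁿ. -/
abbrev Vn (n : ℕ) : Type := Fin n → ℝ

/-- Pairings (fiber metrics pairing `E⁺` with `E⁻`) on the trivialized bundle. -/
abbrev Pairn (n : ℕ) : Type := Vn n →L[ℝ] Vn n →L[ℝ] ℝ

/-- Connection forms on the trivialized bundle. -/
abbrev Connn (n : ℕ) : Type := Vn n →L[ℝ] Vn n →L[ℝ] Vn n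

/-- Bundle maps `TU → E±` in the trivialization. -/
abbrev Bdln (n : ℕ) : Type := Vn n →L[ℝ] Vn n

/-- Covariant derivative of the section `ν` along the vector field `X`,
for the connection with connection form `A`. -/
def cov {n : ℕ} (A : Vn n → Connn n) (X ν : Vn n → Vn n) (x : Vn n) : Vn n :=
  fderiv ℝ ν x (X x) + A x (X x) (ν x)

/-- Lie bracket of vector fields on an open set of ℝⁿ. -/
def lieB {n : ℕ} (X Y : Vn n → Vn n) (x : Vn n) : Vn n :=
  fderiv ℝ Y x (X x) - fderiv ℝ X x (Y x)

/-- The section `Φ±Y : x ↦ Φ± x (Y x)`. -/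
def secPhi {n : ℕ} (Φ : Vn n → Bdln n) (Y : Vn n → Vn n) : Vn n → Vn n :=
  fun x => Φ x (Y x)

/-- The induced (possibly degenerate) metric `h x y z = 2 p x (Φ⁺ x y) (Φ⁻ x z)`. -/
def hmet {n : ℕ} (p : Vn n → Pairn n) (Φp Φm : Vn n → Bdln n) (x y z : Vn n) : ℝ :=
  2 * p x (Φp x y) (Φm x z)

/-- The generalized Amari–Chentsov cubic tensor. -/
def Ctensor {n : ℕ} (p : Vn n → Pairn n) (Ap Am : Vn n → Connn n)
    (Φp Φm : Vn n → Bdln n) (X Y Z : Vn n → Vn n) (x : Vn n) : ℝ :=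
  -2 * (p x (cov Ap X (secPhi Φp Y) x) (Φm x (Z x))
        - p x (Φp x (Z x)) (cov Am X (secPhi Φm Y) x))

/-- The relative torsion `T(X,Y) = ∇_X(ΦY) − ∇_Y(ΦX) − Φ[X,Y]`. -/
def Ttor {n : ℕ} (A : Vn n → Connn n) (Φ : Vn n → Bdln n)
    (X Y : Vn n → Vn n) (x : Vn n) : Vn n :=
  cov A X (secPhi Φ Y) x - cov A Y (secPhi Φ X) x - Φ x (lieB X Y x)

/-- The Kossowski pseudo-connection. -/
def Koss {n : ℕ} (p : Vn n → Pairn n) (Φp Φm : Vn n → Bdln n)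
    (X Y Z : Vn n → Vn n) (x : Vn n) : ℝ :=
  fderiv ℝ (fun y => p y (Φp y (Y y)) (Φm y (Z y))) x (X x)
  + fderiv ℝ (fun y => p y (Φp y (Z y)) (Φm y (X y))) x (Y x)
  - fderiv ℝ (fun y => p y (Φp y (X y)) (Φm y (Y y))) x (Z x)
  - p x (Φp x (X x)) (Φm x (lieB Y Z x))
  + p x (Φp x (Y x)) (Φm x (lieB Z X x))
  + p x (Φp x (Z x)) (Φm x (lieB X Y x))

/-- The curvature of a connection form `A` at `x` in directions `v`, `w`. -/
def curvA {n : ℕ} (A : Vn n → Connn n) (x v w : Vn n) : Vn n →L[ℝ] Vn n :=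
  fderiv ℝ A x v w - fderiv ℝ A x w v + (A x v).comp (A x w) - (A x w).comp (A x v)

/-- `ρ[v|w](x) = D²ρ(x,x)[(v,0),(0,w)]`. -/
def rho2 {n : ℕ} (ρ : Vn n × Vn n → ℝ) (x v w : Vn n) : ℝ :=
  fderiv ℝ (fun q => fderiv ℝ ρ q (0, w)) (x, x) (v, 0)

/-- `ρ[vw|u](x) = D³ρ(x,x)[(v,0),(w,0),(0,u)]`. -/
def rho3L {n : ℕ} (ρ : Vn n × Vn n → ℝ) (x v w u : Vn n) : ℝ :=
  fderiv ℝ (fun q => fderiv ℝ (fun r => fderiv ℝ ρ r (0, u)) q (w, 0)) (x, x) (v, 0)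

/-- `ρ[u|vw](x) = D³ρ(x,x)[(u,0),(0,v),(0,w)]`. -/
def rho3R {n : ℕ} (ρ : Vn n × Vn n → ℝ) (x v w u : Vn n) : ℝ :=
  fderiv ℝ (fun q => fderiv ℝ (fun r => fderiv ℝ ρ r (0, w)) q (0, v)) (x, x) (u, 0)

open Filter Topology

section ThirdDerivative

variable {E F G H : Type*} [NormedAddCommGroup E] [NormedSpace ℝ E]
  [NormedAddCommGroup F] [NormedSpace ℝ F] [NormedAddCommGroup G] [NormedSpace ℝ G]
  [NormedAddCommGroup H] [NormedSpace ℝ H]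

theorem fderiv_clm_apply_const_apply {c : E → F →L[ℝ] G} {x : E}
    (hc : DifferentiableAt ℝ c x) (a : F) (v : E) :
    fderiv ℝ (fun y => c y a) x v = fderiv ℝ c x v a := by
  have h : HasFDerivAt (fun y => c y a)
      ((ContinuousLinearMap.apply ℝ G a).comp (fderiv ℝ c x)) x :=
    (ContinuousLinearMap.apply ℝ G a).hasFDerivAt.comp x hc.hasFDerivAt
  rw [h.fderiv]
  rfl

theorem DifferentiableAt.clm_apply_const {c : E → F →L[ℝ] G} {x : E}
    (hc : DifferentiableAt ℝ c x) (a : F) : DifferentiableAt ℝ (fun y => c y a) x :=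
  (ContinuousLinearMap.apply ℝ G a).differentiableAt.comp x hc

theorem fderiv_clm_apply_const_apply₂ {c : E → F →L[ℝ] G →L[ℝ] H} {x : E}
    (hc : DifferentiableAt ℝ c x) (a : F) (b : G) (v : E) :
    fderiv ℝ (fun y => c y a b) x v = fderiv ℝ c x v a b := by
  rw [fderiv_clm_apply_const_apply (hc.clm_apply_const a), fderiv_clm_apply_const_apply hc]

theorem fderiv_comp_diag_apply {g : E × E → F} {x : E} (hg : DifferentiableAt ℝ g (x, x))
    (v : E) :
    fderiv ℝ (fun y => g (y, y)) x v = fderiv ℝ g (x, x) (v, 0) + fderiv ℝ g (x, x) (0, v) := by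
  have h : HasFDerivAt (fun y => g (y, y)) ((fderiv ℝ g (x, x)).comp
      ((ContinuousLinearMap.id ℝ E).prod (ContinuousLinearMap.id ℝ E))) x :=
    hg.hasFDerivAt.comp (f := fun y : E => (y, y)) x ((hasFDerivAt_id x).prodMk (hasFDerivAt_id x))
  rw [h.fderiv, ← map_add]
  simp

variable {f : E → F} {q : E}

theorem ContDiffAt.eventually_differentiableAt_fderiv (hf : ContDiffAt ℝ 3 f q) :
    ∀ᶠ y in 𝓝 q, DifferentiableAt ℝ (fderiv ℝ f) y := by
  filter_upwards [hf.eventually (by simp)] with y hy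
  exact (hy.fderiv_right (m := 2) (by norm_num)).differentiableAt (by norm_num)

theorem ContDiffAt.differentiableAt_fderiv_fderiv (hf : ContDiffAt ℝ 3 f q) :
    DifferentiableAt ℝ (fderiv ℝ (fderiv ℝ f)) q :=
  ((hf.fderiv_right (m := 2) (by norm_num)).fderiv_right (m := 1) (by norm_num)).differentiableAt
    (by norm_num)

theorem ContDiffAt.fderiv_fderiv_fderiv_apply_eq (hf : ContDiffAt ℝ 3 f q) (a b c : E) :
    fderiv ℝ (fun y => fderiv ℝ (fun z => fderiv ℝ f z b) y a) q c
      = fderiv ℝ (fderiv ℝ (fderiv ℝ f)) q c a b := by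
  have h : (fun y => fderiv ℝ (fun z => fderiv ℝ f z b) y a)
      =ᶠ[𝓝 q] fun y => fderiv ℝ (fderiv ℝ f) y a b := by
    filter_upwards [hf.eventually_differentiableAt_fderiv] with y hy
    exact fderiv_clm_apply_const_apply hy b a
  rw [h.fderiv_eq, fderiv_clm_apply_const_apply₂ hf.differentiableAt_fderiv_fderiv]

theorem ContDiffAt.differentiableAt_fderiv_fderiv_apply (hf : ContDiffAt ℝ 3 f q) (a b : E) :
    DifferentiableAt ℝ (fun y => fderiv ℝ (fun z => fderiv ℝ f z b) y a) q := by
  refine ((hf.differentiableAt_fderiv_fderiv.clm_apply_const a).clm_apply_const b)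
    |>.congr_of_eventuallyEq ?_
  filter_upwards [hf.eventually_differentiableAt_fderiv] with y hy
  exact fderiv_clm_apply_const_apply hy b a

theorem ContDiffAt.fderiv_fderiv_fderiv_swap₁₂ (hf : ContDiffAt ℝ 3 f q) (a b c : E) :
    fderiv ℝ (fderiv ℝ (fderiv ℝ f)) q a b c
      = fderiv ℝ (fderiv ℝ (fderiv ℝ f)) q b a c := by
  have hsymm : IsSymmSndFDerivAt ℝ (fderiv ℝ f) q :=
    (hf.fderiv_right (m := 2) (by norm_num)).isSymmSndFDerivAt (by simp)
  rw [hsymm a b]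

theorem ContDiffAt.fderiv_fderiv_fderiv_swap₂₃ (hf : ContDiffAt ℝ 3 f q) (a b c : E) :
    fderiv ℝ (fderiv ℝ (fderiv ℝ f)) q a b c
      = fderiv ℝ (fderiv ℝ (fderiv ℝ f)) q a c b := by
  have hsymm : (fun y => fderiv ℝ (fderiv ℝ f) y b c)
      =ᶠ[𝓝 q] fun y => fderiv ℝ (fderiv ℝ f) y c b := by
    filter_upwards [hf.eventually (by simp)] with y hy
    exact hy.isSymmSndFDerivAt (by norm_num [minSmoothness_of_isRCLikeNormedField]) b c
  have hd := hf.differentiableAt_fderiv_fderiv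
  rw [← fderiv_clm_apply_const_apply₂ hd, ← fderiv_clm_apply_const_apply₂ hd,
    hsymm.fderiv_eq]

end ThirdDerivative

theorem eq_zero_of_comm₁₂_of_anticomm₂₃ {α M : Type*} [AddCommGroup M] [IsAddTorsionFree M]
    {f : α → α → α → M} (h₁₂ : ∀ a b c, f a b c = f b a c)
    (h₂₃ : ∀ a b c, f a b c = -f a c b)
    (a b c : α) : f a b c = 0 := by
  have h : f a b c = -f a b c := calc
    f a b c = -f c a b := by rw [h₂₃, h₁₂]
    _ = f b c a := by rw [h₂₃, neg_neg, h₁₂]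
    _ = -f a b c := by rw [h₂₃, h₁₂]
  exact two_nsmul_eq_zero.mp (by rw [two_nsmul]; exact add_eq_zero_iff_eq_neg.mpr h)

section ContrastFunction

variable {n : ℕ} {ρ : Vn n × Vn n → ℝ} {x : Vn n}

theorem rho3L_eq (hρ : ContDiffAt ℝ 3 ρ (x, x)) (v w u : Vn n) :
    rho3L ρ x v w u = fderiv ℝ (fderiv ℝ (fderiv ℝ ρ)) (x, x) (v, 0) (w, 0) (0, u) :=
  hρ.fderiv_fderiv_fderiv_apply_eq _ _ _

theorem rho3R_eq (hρ : ContDiffAt ℝ 3 ρ (x, x)) (v w u : Vn n) :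
    rho3R ρ x v w u = fderiv ℝ (fderiv ℝ (fderiv ℝ ρ)) (x, x) (u, 0) (0, v) (0, w) :=
  hρ.fderiv_fderiv_fderiv_apply_eq _ _ _

theorem rho3L_comm (hρ : ContDiffAt ℝ 3 ρ (x, x)) (v w u : Vn n) :
    rho3L ρ x v w u = rho3L ρ x w v u := by
  rw [rho3L_eq hρ, rho3L_eq hρ, hρ.fderiv_fderiv_fderiv_swap₁₂]

theorem fderiv_rho2 (hρ : ContDiffAt ℝ 3 ρ (x, x)) (v w u : Vn n) :
    fderiv ℝ (fun y => rho2 ρ y w u) x v = rho3L ρ x v w u + rho3R ρ x v u w := by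
  change fderiv ℝ (fun y => (fun q => fderiv ℝ (fun r => fderiv ℝ ρ r (0, u)) q (w, 0)) (y, y))
    x v = _
  rw [fderiv_comp_diag_apply (hρ.differentiableAt_fderiv_fderiv_apply _ _)]
  congr 1
  rw [hρ.fderiv_fderiv_fderiv_apply_eq, rho3R_eq hρ, hρ.fderiv_fderiv_fderiv_swap₁₂]

end ContrastFunction

section Connection

variable {n : ℕ} {p : Vn n → Pairn n} {Ap Am : Vn n → Connn n} {Φp Φm : Vn n → Bdln n}
  {x : Vn n}

theorem cov_const_secPhi {A : Vn n → Connn n} {Φ : Vn n → Bdln n}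
    (hΦ : DifferentiableAt ℝ Φ x) (v w : Vn n) :
    cov A (fun _ => v) (secPhi Φ fun _ => w) x = fderiv ℝ Φ x v w + A x v (Φ x w) := by
  rw [cov, ← fderiv_clm_apply_const_apply hΦ]
  rfl

theorem cov_const_secPhi_comm_of_Ttor_eq_zero {A : Vn n → Connn n} {Φ : Vn n → Bdln n}
    {v w : Vn n} (h : Ttor A Φ (fun _ => v) (fun _ => w) x = 0) :
    cov A (fun _ => v) (secPhi Φ fun _ => w) x = cov A (fun _ => w) (secPhi Φ fun _ => v) x := by
  have hlie : lieB (fun _ => v) (fun _ => w) x = 0 := by simp [lieB]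
  rwa [Ttor, hlie, map_zero, sub_zero, sub_eq_zero] at h

theorem fderiv_pairing_secPhi (hp : DifferentiableAt ℝ p x) (hΦp : DifferentiableAt ℝ Φp x)
    (hΦm : DifferentiableAt ℝ Φm x)
    (hdual : ∀ v a b : Vn n, fderiv ℝ p x v a b = p x (Ap x v a) b + p x a (Am x v b))
    (v w u : Vn n) :
    fderiv ℝ (fun y => p y (Φp y w) (Φm y u)) x v
      = p x (cov Ap (fun _ => v) (secPhi Φp fun _ => w) x) (Φm x u)
        + p x (Φp x w) (cov Am (fun _ => v) (secPhi Φm fun _ => u) x) := by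
  rw [fderiv_clm_apply (hp.clm_apply (hΦp.clm_apply_const w)) (hΦm.clm_apply_const u),
    fderiv_clm_apply hp (hΦp.clm_apply_const w)]
  simp only [add_apply, ContinuousLinearMap.comp_apply, ContinuousLinearMap.flip_apply,
    fderiv_clm_apply_const_apply hΦp, fderiv_clm_apply_const_apply hΦm, hdual,
    cov_const_secPhi hΦp, cov_const_secPhi hΦm, map_add]
  ring

end Connection

section Compatibility

variable {n : ℕ} {p : Vn n → Pairn n} {Ap Am : Vn n → Connn n} {Φp Φm : Vn n → Bdln n}
  {ρ : Vn n × Vn n → ℝ} {x : Vn n}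

theorem two_mul_pairing_cov_add_eq_of_hmet_eq (hp : DifferentiableAt ℝ p x)
    (hΦp : DifferentiableAt ℝ Φp x) (hΦm : DifferentiableAt ℝ Φm x)
    (hdual : ∀ v a b : Vn n, fderiv ℝ p x v a b = p x (Ap x v a) b + p x a (Am x v b))
    (hρ : ContDiffAt ℝ 3 ρ (x, x))
    (hcompat : ∀ᶠ y in 𝓝 x, ∀ w u : Vn n, hmet p Φp Φm y w u = -rho2 ρ y w u)
    (v w u : Vn n) :
    2 * (p x (cov Ap (fun _ => v) (secPhi Φp fun _ => w) x) (Φm x u)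
        + p x (Φp x w) (cov Am (fun _ => v) (secPhi Φm fun _ => u) x))
      = -(rho3L ρ x v w u + rho3R ρ x v u w) := by
  have hfun : (fun y => 2 * p y (Φp y w) (Φm y u)) =ᶠ[𝓝 x] fun y => -rho2 ρ y w u := by
    filter_upwards [hcompat] with y hy using hy w u
  have hd : DifferentiableAt ℝ (fun y => p y (Φp y w) (Φm y u)) x :=
    (hp.clm_apply (hΦp.clm_apply_const w)).clm_apply (hΦm.clm_apply_const u)
  have h := DFunLike.congr_fun (hfun.fderiv_eq (𝕜 := ℝ)) v
  simp only [fderiv_const_mul hd, fderiv_fun_neg, smul_apply, neg_apply, smul_eq_mul] at h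
  rw [← fderiv_pairing_secPhi hp hΦp hΦm hdual, h, fderiv_rho2 hρ]

end Compatibility

theorem statement18_general {n : ℕ} (U : Set (Vn n)) (hUopen : IsOpen U)
    (p : Vn n → Pairn n) (hpsmooth : ContDiffOn ℝ (⊤ : ℕ∞) p U)
    (Ap Am : Vn n → Connn n)
    (hdual : ∀ x ∈ U, ∀ v a b : Vn n,
      fderiv ℝ p x v a b = p x (Ap x v a) b + p x a (Am x v b))
    (Φp Φm : Vn n → Bdln n)
    (hΦpsmooth : ContDiffOn ℝ (⊤ : ℕ∞) Φp U) (hΦmsmooth : ContDiffOn ℝ (⊤ : ℕ∞) Φm U)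
    -- vanishing of both relative torsions (quasi-Codazzi structure)
    (hTp : ∀ X Y : Vn n → Vn n,
      ContDiffOn ℝ (⊤ : ℕ∞) X U → ContDiffOn ℝ (⊤ : ℕ∞) Y U →
      ∀ x ∈ U, Ttor Ap Φp X Y x = 0)
    -- a compatible weak contrast function
    (ρ : Vn n × Vn n → ℝ)
    (hρsmooth : ContDiffOn ℝ (⊤ : ℕ∞) ρ (U ×ˢ U))
    (hcompath : ∀ x ∈ U, ∀ v w : Vn n, hmet p Φp Φm x v w = -(rho2 ρ x v w))
    (hcompatC : ∀ x ∈ U, ∀ v w u : Vn n,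
      Ctensor p Ap Am Φp Φm (fun _ => v) (fun _ => w) (fun _ => u) x
        = rho3L ρ x v w u - rho3R ρ x v w u) :
    ∀ x ∈ U, ∀ v w u : Vn n,
      p x (cov Ap (fun _ => v) (secPhi Φp (fun _ => w)) x) (Φm x u)
        = -((1:ℝ)/2) * rho3L ρ x v w u ∧
      p x (Φp x u) (cov Am (fun _ => v) (secPhi Φm (fun _ => w)) x)
        = -((1:ℝ)/2) * rho3R ρ x v w u := by
  intro x hx v w u
  have hxU : U ∈ 𝓝 x := hUopen.mem_nhds hx
  have hρ : ContDiffAt ℝ 3 ρ (x, x) :=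
    (hρsmooth.contDiffAt (prod_mem_nhds hxU hxU)).of_le (WithTop.coe_le_coe.mpr le_top)
  set Γp : Vn n → Vn n → Vn n → ℝ :=
    fun v w u => p x (cov Ap (fun _ => v) (secPhi Φp fun _ => w) x) (Φm x u)
  set Γm : Vn n → Vn n → Vn n → ℝ :=
    fun v w u => p x (Φp x u) (cov Am (fun _ => v) (secPhi Φm fun _ => w) x)
  have hmetric (v w u : Vn n) :
      2 * (Γp v w u + Γm v u w) = -(rho3L ρ x v w u + rho3R ρ x v u w) :=
    two_mul_pairing_cov_add_eq_of_hmet_eq ((hpsmooth.contDiffAt hxU).differentiableAt (by simp))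
      ((hΦpsmooth.contDiffAt hxU).differentiableAt (by simp))
      ((hΦmsmooth.contDiffAt hxU).differentiableAt (by simp)) (hdual x hx) hρ
      (eventually_of_mem hxU fun y hy => hcompath y hy) v w u
  have hcubic (v w u : Vn n) :
      -2 * (Γp v w u - Γm v w u) = rho3L ρ x v w u - rho3R ρ x v w u :=
    hcompatC x hx v w u
  have hΓp_comm (v w u : Vn n) : Γp v w u = Γp w v u := by
    simp only [Γp, cov_const_secPhi_comm_of_Ttor_eq_zero
      (hTp _ _ contDiffOn_const contDiffOn_const x hx)]
  have hvanish : Γp v w u + 1 / 2 * rho3L ρ x v w u = 0 :=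
    eq_zero_of_comm₁₂_of_anticomm₂₃ (f := fun v w u => Γp v w u + 1 / 2 * rho3L ρ x v w u)
      (fun a b c => by rw [hΓp_comm, rho3L_comm hρ])
      (fun a b c => by linarith [hmetric a b c, hcubic a c b]) v w u
  constructor <;> linarith [hcubic v w u]

/-- Paper's Corollary 3.28: for a quasi-Codazzi structure (in a trivialization, with
vanishing relative torsions) and a compatible weak contrast function `ρ`, one has
`p(∇⁺_v(Φ⁺w), Φ⁻u) = −(1/2)ρ[vw|u]` and `p(Φ⁺u, ∇⁻_v(Φ⁻w)) = −(1/2)ρ[u|vw]`. -/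
theorem statement18 {n : ℕ} (U : Set (Vn n)) (hUopen : IsOpen U)
    (p : Vn n → Pairn n) (hpsmooth : ContDiffOn ℝ (⊤ : ℕ∞) p U)
    (Ap Am : Vn n → Connn n)
    (hApsmooth : ContDiffOn ℝ (⊤ : ℕ∞) Ap U) (hAmsmooth : ContDiffOn ℝ (⊤ : ℕ∞) Am U)
    (hdual : ∀ x ∈ U, ∀ v a b : Vn n,
      fderiv ℝ p x v a b = p x (Ap x v a) b + p x a (Am x v b))
    (Φp Φm : Vn n → Bdln n)
    (hΦpsmooth : ContDiffOn ℝ (⊤ : ℕ∞) Φp U) (hΦmsmooth : ContDiffOn ℝ (⊤ : ℕ∞) Φm U)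
    (hLag : ∀ x ∈ U, ∀ y z : Vn n, p x (Φp x y) (Φm x z) = p x (Φp x z) (Φm x y))
    -- vanishing of both relative torsions (quasi-Codazzi structure)
    (hTp : ∀ X Y : Vn n → Vn n,
      ContDiffOn ℝ (⊤ : ℕ∞) X U → ContDiffOn ℝ (⊤ : ℕ∞) Y U →
      ∀ x ∈ U, Ttor Ap Φp X Y x = 0)
    (hTm : ∀ X Y : Vn n → Vn n,
      ContDiffOn ℝ (⊤ : ℕ∞) X U → ContDiffOn ℝ (⊤ : ℕ∞) Y U →
      ∀ x ∈ U, Ttor Am Φm X Y x = 0)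
    -- a compatible weak contrast function
    (ρ : Vn n × Vn n → ℝ)
    (hρsmooth : ContDiffOn ℝ (⊤ : ℕ∞) ρ (U ×ˢ U))
    (hρ0 : ∀ x ∈ U, ρ (x, x) = 0)
    (hρ1 : ∀ x ∈ U, fderiv ℝ ρ (x, x) = 0)
    (hcompath : ∀ x ∈ U, ∀ v w : Vn n, hmet p Φp Φm x v w = -(rho2 ρ x v w))
    (hcompatC : ∀ x ∈ U, ∀ v w u : Vn n,
      Ctensor p Ap Am Φp Φm (fun _ => v) (fun _ => w) (fun _ => u) x
        = rho3L ρ x v w u - rho3R ρ x v w u) :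
    ∀ x ∈ U, ∀ v w u : Vn n,
      p x (cov Ap (fun _ => v) (secPhi Φp (fun _ => w)) x) (Φm x u)
        = -((1:ℝ)/2) * rho3L ρ x v w u ∧
      p x (Φp x u) (cov Am (fun _ => v) (secPhi Φm (fun _ => w)) x)
        = -((1:ℝ)/2) * rho3R ρ x v w u :=
  statement18_general U hUopen p hpsmooth Ap Am hdual Φp Φm hΦpsmooth hΦmsmooth hTp ρ hρsmooth
    hcompath hcompatC
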